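/- (Example 3, fractional Liu system, stable manifold formula.) Let 0 < p < 1 and let A be the 3×3 diagonal matrix diag(−1, 5/2, −5) (stable eigenvalues −1 and −5, unstable eigenvalue 5/2); let f(x₁,x₂,x₃) := (0, −4 x₁ x₃, 0); let π_s(x₁,x₂,x₃) = (x₁,0,x₃) and π_u(x₁,x₂,x₃) = (0,x₂,0). Let σ = (σ₁,0,σ₃) and let x : [0,∞) → ℂ³ be a bounded continuous fixed point of T_σ (with the integrand τ ↦ (p/τ) B̃(−τ) π_u f(x(τ)) Bochner integrable on (0,∞)). Then x₁(t) = E_p(−t^p) σ₁ and x₃(t) = E_p(−5 t^p) σ₃ for all t ≥ 0, and the second coordinate at time 0 satisfies x₂(0) = 4 · (5/2)^{1/p − 1} · σ₁ σ₃ · ∫_0^∞ e^{−(5/2)^{1/p} τ} E_p(−τ^p) E_p(−5 τ^p) dτ. -/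

import Mathlib

open MeasureTheory

noncomputable def mlE (p β : ℝ) (z : ℂ) : ℂ :=
  ∑' k : ℕ, z ^ k / Complex.Gamma ((p * k + β : ℝ) : ℂ)

noncomputable def psiT (p : ℝ) (m : ℕ) (t : ℝ) (lam : ℂ) : ℂ :=
  (1 / (m.factorial : ℂ)) *
    iteratedDeriv (m + 1) (fun z : ℂ => Complex.exp ((t : ℂ) * z ^ (1 / (p : ℂ)))) lam

noncomputable def mlEM {ι : Type*} [Fintype ι] [DecidableEq ι] (p β : ℝ) (M : Matrix ι ι ℂ) :
    Matrix ι ι ℂ :=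
  ∑' k : ℕ, (Complex.Gamma ((p * k + β : ℝ) : ℂ))⁻¹ • M ^ k

noncomputable def mvE {ι : Type*} [Fintype ι] [DecidableEq ι] (M : Matrix ι ι ℂ)
    (v : EuclideanSpace ℂ ι) : EuclideanSpace ℂ ι :=
  Matrix.toEuclideanLin M v

def BC {E : Type*} [NormedAddCommGroup E] (x : ℝ → E) : Prop :=
  ContinuousOn x (Set.Ici 0) ∧ ∃ C, ∀ t : ℝ, 0 ≤ t → ‖x t‖ ≤ C

/-- the matrix of the fractional Liu example: `diag(-1, 5/2, -5)`. -/
noncomputable def A19 : Matrix (Fin 3) (Fin 3) ℂ := !![-1, 0, 0; 0, 5/2, 0; 0, 0, -5]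

/-- the matrix `B̃(t)` of the Liu example: `diag(0, Ψ̃₀(t,5/2), 0)`. -/
noncomputable def Bt19 (p : ℝ) (t : ℝ) : Matrix (Fin 3) (Fin 3) ℂ :=
  !![0, 0, 0; 0, psiT p 0 t (5/2), 0; 0, 0, 0]

/-- the nonlinearity `f(x₁,x₂,x₃) = (0, -4x₁x₃, 0)` of the Liu example. -/
noncomputable def f19 (v : EuclideanSpace ℂ (Fin 3)) : EuclideanSpace ℂ (Fin 3) :=
  (WithLp.equiv 2 (Fin 3 → ℂ)).symm ![0, -4 * v 0 * v 2, 0]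

/-- the unstable projection `π_u(x₁,x₂,x₃) = (0,x₂,0)`. -/
noncomputable def piu19 (v : EuclideanSpace ℂ (Fin 3)) : EuclideanSpace ℂ (Fin 3) :=
  (WithLp.equiv 2 (Fin 3 → ℂ)).symm ![0, v 1, 0]

/-- the operator `T_σ` of the Liu example. -/
noncomputable def T19 (p : ℝ) (σ : EuclideanSpace ℂ (Fin 3)) (x : ℝ → EuclideanSpace ℂ (Fin 3))
    (t : ℝ) : EuclideanSpace ℂ (Fin 3) :=
  mvE (mlEM p 1 (((t ^ p : ℝ) : ℂ) • A19)) σ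
    + mvE (mlEM p 1 (((t ^ p : ℝ) : ℂ) • A19))
        (∫ τ in Set.Ioi (0 : ℝ), (p / τ) • mvE (Bt19 p (-τ)) (piu19 (f19 (x τ))))
    + ∫ τ in Set.Ioc (0 : ℝ) t,
        ((t - τ) ^ (p - 1)) • mvE (mlEM p p ((((t - τ) ^ p : ℝ) : ℂ) • A19)) (f19 (x τ))

/-!
Since `A` and `B̃` are diagonal and `f` only has a second coordinate, `T_σ` acts coordinatewise,
and the first and third coordinates of both integral terms of `T_σ` vanish. Hence `x₁` and `x₃`
are the scalar Mittag-Leffler solutions `E_p(-t^p) σ₁` and `E_p(-5 t^p) σ₃`. At `t = 0` the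
convolution term is an integral over an empty interval, `E_p(0) = 1` and `σ₂ = 0`, so `x₂(0)` is the
second coordinate of the `B̃`-integral; there the factor `p / τ` cancels the factor `t / p` of
`Ψ̃₀(-τ, 5/2)`, leaving `-(5/2)^(1/p - 1) e^{-(5/2)^(1/p) τ}` times `-4 x₁(τ) x₃(τ)`.
-/

open Nat in
theorem Real.inv_Gamma_le_exp_mul_rpow {x R : ℝ} (hx : 2 ≤ x) (hR : 1 ≤ R) :
    (Real.Gamma x)⁻¹ ≤ Real.exp R * R ^ (2 - x) := by
  set n := ⌊x⌋₊ - 1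
  have hfloor : 2 ≤ ⌊x⌋₊ := Nat.le_floor (by exact_mod_cast hx)
  have hn : (n : ℝ) + 1 = ⌊x⌋₊ := by norm_cast; omega
  have hn_ge : x - 2 ≤ n := by linarith [Nat.lt_floor_add_one x]
  have hfac : (n ! : ℝ) ≤ Real.Gamma x := by
    rw [← Real.Gamma_nat_eq_factorial]
    refine Real.Gamma_strictMonoOn_Ici.monotoneOn ?_ hx (hn ▸ Nat.floor_le (by linarith))
    simp only [Set.mem_Ici, hn]
    exact_mod_cast hfloor
  have hR0 : 0 < R := by linarith
  calc (Real.Gamma x)⁻¹ ≤ (n ! : ℝ)⁻¹ := inv_anti₀ (by positivity) hfac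
    _ ≤ Real.exp R * R ^ (-(n : ℝ)) := by
      rw [Real.rpow_neg hR0.le, Real.rpow_natCast, ← div_eq_mul_inv, le_div_iff₀ (by positivity),
        inv_mul_eq_div]
      exact Real.pow_div_factorial_le_exp R hR0.le n
    _ ≤ Real.exp R * R ^ (2 - x) := by
      gcongr
      linarith

theorem summable_inv_Gamma_mul_pow {p β : ℝ} (hp : 0 < p) (hβ : 0 < β) (z : ℂ) :
    Summable fun k : ℕ => (Complex.Gamma ((p * k + β : ℝ) : ℂ))⁻¹ * z ^ k := by
  set R := max 1 ((2 * (‖z‖ + 1)) ^ p⁻¹)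
  have hR : 1 ≤ R := le_max_left _ _
  have hR0 : 0 < R := by positivity
  have hRp : 2 * (‖z‖ + 1) ≤ R ^ p := by
    calc 2 * (‖z‖ + 1) = ((2 * (‖z‖ + 1)) ^ p⁻¹) ^ p := by
          rw [← Real.rpow_mul (by positivity), inv_mul_cancel₀ hp.ne', Real.rpow_one]
      _ ≤ R ^ p := by gcongr; exact le_max_right _ _
  have hratio : ‖z‖ / R ^ p ≤ 1 / 2 := by
    rw [div_le_iff₀ (by positivity)]
    linarith
  refine Summable.of_norm_bounded_eventually_nat
    ((summable_geometric_two).mul_left (Real.exp R * R ^ (2 - β))) ?_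
  obtain ⟨k₀, hk₀⟩ := exists_nat_ge (2 / p)
  filter_upwards [Filter.eventually_ge_atTop k₀] with k hk
  have hx : 2 ≤ p * k + β := by
    have : 2 ≤ p * k := by
      rw [div_le_iff₀ hp] at hk₀
      nlinarith [(Nat.cast_le (α := ℝ)).2 hk]
    linarith
  rw [norm_mul, norm_inv, norm_pow, Complex.Gamma_ofReal, Complex.norm_real,
    Real.norm_of_nonneg (Real.Gamma_pos_of_pos (by linarith)).le]
  calc (Real.Gamma (p * k + β))⁻¹ * ‖z‖ ^ k
      ≤ Real.exp R * R ^ (2 - (p * k + β)) * ‖z‖ ^ k := by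
        gcongr
        exact Real.inv_Gamma_le_exp_mul_rpow hx hR
    _ = Real.exp R * R ^ (2 - β) * (‖z‖ / R ^ p) ^ k := by
        rw [div_pow, ← Real.rpow_natCast (R ^ p), ← Real.rpow_mul hR0.le,
          show 2 - (p * k + β) = (2 - β) - p * k by ring, Real.rpow_sub hR0]
        ring
    _ ≤ Real.exp R * R ^ (2 - β) * (1 / 2) ^ k := by gcongr

theorem mlE_eq_tsum (p β : ℝ) (z : ℂ) :
    mlE p β z = ∑' k : ℕ, (Complex.Gamma ((p * k + β : ℝ) : ℂ))⁻¹ * z ^ k :=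
  tsum_congr fun k => by rw [div_eq_inv_mul]

theorem mlE_zero (p β : ℝ) : mlE p β 0 = (Complex.Gamma β)⁻¹ := by
  rw [mlE_eq_tsum, tsum_eq_single 0 fun k hk => by simp [zero_pow hk]]
  simp

theorem mlEM_diagonal {ι : Type*} [Fintype ι] [DecidableEq ι] {p β : ℝ} (hp : 0 < p)
    (hβ : 0 < β) (d : ι → ℂ) :
    mlEM p β (Matrix.diagonal d) = Matrix.diagonal fun i => mlE p β (d i) := by
  have hsum : Summable fun k : ℕ => fun i => (Complex.Gamma ((p * k + β : ℝ) : ℂ))⁻¹ * d i ^ k :=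
    Pi.summable.mpr fun i => summable_inv_Gamma_mul_pow hp hβ (d i)
  simp_rw [mlEM, Matrix.diagonal_pow, ← Matrix.diagonal_smul, ← Matrix.diagonal_tsum]
  congr 1
  funext i
  rw [mlE_eq_tsum, ← tsum_apply hsum]
  rfl

theorem mvE_diagonal_apply {ι : Type*} [Fintype ι] [DecidableEq ι] (d : ι → ℂ)
    (v : EuclideanSpace ℂ ι) (i : ι) : mvE (Matrix.diagonal d) v i = d i * v i := by
  simp [mvE, Matrix.toLpLin_apply, Matrix.mulVec_diagonal]

theorem psiT_zero_apply {p : ℝ} (t : ℝ) {lam : ℂ} (hlam : lam ∈ Complex.slitPlane) :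
    psiT p 0 t lam
      = t * (1 / p) * lam ^ (1 / (p : ℂ) - 1) * Complex.exp (t * lam ^ (1 / (p : ℂ))) := by
  have hderiv :=
    ((Complex.hasStrictDerivAt_cpow_const (c := 1 / (p : ℂ)) hlam).hasDerivAt.const_mul
      (t : ℂ)).cexp
  rw [psiT, zero_add, iteratedDeriv_one, hderiv.deriv]
  simp only [Nat.factorial_zero, Nat.cast_one]
  ring

theorem integral_piLp_apply_eq_zero {X ι : Type*} [MeasurableSpace X] {μ : Measure X}
    [Fintype ι] {q : ENNReal} [Fact (1 ≤ q)] {E : ι → Type*} [∀ i, NormedAddCommGroup (E i)]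
    [∀ i, NormedSpace ℝ (E i)] [∀ i, CompleteSpace (E i)] {F : X → PiLp q E} {i : ι}
    (hF : ∀ x, F x i = 0) : (∫ x, F x ∂μ) i = 0 := by
  by_cases hint : Integrable F μ
  · simp [eval_integral_piLp hint.eval_piLp, hF]
  · rw [integral_undef hint]
    rfl

theorem smul_A19 (c : ℂ) : c • A19 = Matrix.diagonal ![-c, 5 / 2 * c, -5 * c] := by
  ext i j
  fin_cases i <;> fin_cases j <;> simp [A19] <;> ring

theorem Bt19_eq_diagonal (p t : ℝ) : Bt19 p t = Matrix.diagonal ![0, psiT p 0 t (5 / 2), 0] := by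
  ext i j
  fin_cases i <;> fin_cases j <;> simp [Bt19]

theorem piu19_f19 (v : EuclideanSpace ℂ (Fin 3)) : piu19 (f19 v) = f19 v := by
  ext i
  fin_cases i <;> rfl

theorem smul_mvE_diagonal_f19_apply_of_ne_one (s : ℝ) (d : Fin 3 → ℂ)
    (v : EuclideanSpace ℂ (Fin 3)) {i : Fin 3} (hi : i ≠ 1) :
    (s • mvE (Matrix.diagonal d) (f19 v)) i = 0 := by
  rw [PiLp.smul_apply, mvE_diagonal_apply]
  fin_cases i <;> simp_all [f19]

theorem T19_apply_of_ne_one {p : ℝ} (hp : 0 < p) (σ : EuclideanSpace ℂ (Fin 3))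
    (x : ℝ → EuclideanSpace ℂ (Fin 3)) (t : ℝ) {i : Fin 3} (hi : i ≠ 1) :
    T19 p σ x t i
      = mlE p 1 (![-((t ^ p : ℝ) : ℂ), 5 / 2 * ((t ^ p : ℝ) : ℂ), -5 * ((t ^ p : ℝ) : ℂ)] i)
          * σ i := by
  simp_rw [T19, PiLp.add_apply, smul_A19, mlEM_diagonal hp one_pos, mlEM_diagonal hp hp,
    mvE_diagonal_apply, piu19_f19, Bt19_eq_diagonal]
  rw [integral_piLp_apply_eq_zero fun τ => smul_mvE_diagonal_f19_apply_of_ne_one _ _ _ hi,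
    integral_piLp_apply_eq_zero fun τ => smul_mvE_diagonal_f19_apply_of_ne_one _ _ _ hi]
  ring

theorem T19_zero_apply_one {p : ℝ} (hp : 0 < p) (σ : EuclideanSpace ℂ (Fin 3))
    {x : ℝ → EuclideanSpace ℂ (Fin 3)}
    (hint : IntegrableOn (fun τ : ℝ => (p / τ) • mvE (Bt19 p (-τ)) (piu19 (f19 (x τ))))
      (Set.Ioi 0)) :
    T19 p σ x 0 1
      = σ 1 + ∫ τ in Set.Ioi (0 : ℝ),
          ((p / τ : ℝ) : ℂ) * psiT p 0 (-τ) (5 / 2) * (-4 * x τ 0 * x τ 2) := by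
  rw [T19, PiLp.add_apply, PiLp.add_apply, Set.Ioc_self, Measure.restrict_empty,
    integral_zero_measure, Real.zero_rpow hp.ne', smul_A19, mlEM_diagonal hp one_pos,
    mvE_diagonal_apply, mvE_diagonal_apply, eval_integral_piLp hint.eval_piLp]
  simp [mlE_zero, Bt19_eq_diagonal, mvE_diagonal_apply, piu19, f19, mul_assoc]

theorem ofReal_div_mul_psiT_neg {p τ lam : ℝ} (hp : p ≠ 0) (hτ : τ ≠ 0) (hlam : 0 < lam) :
    ((p / τ : ℝ) : ℂ) * psiT p 0 (-τ) lam
      = -((lam ^ (1 / p - 1) : ℝ) : ℂ) * (Real.exp (-(lam ^ (1 / p)) * τ) : ℝ) := by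
  have hpC : (p : ℂ) ≠ 0 := Complex.ofReal_ne_zero.mpr hp
  have hτC : (τ : ℂ) ≠ 0 := Complex.ofReal_ne_zero.mpr hτ
  rw [psiT_zero_apply _ (Complex.ofReal_mem_slitPlane.mpr hlam), Complex.ofReal_exp]
  push_cast
  rw [Complex.ofReal_cpow hlam.le, Complex.ofReal_cpow hlam.le]
  push_cast
  field_simp

theorem stmt_19_general (p : ℝ) (hp0 : 0 < p) (σ₁ σ₃ : ℂ)
    (x : ℝ → EuclideanSpace ℂ (Fin 3))
    (hint : MeasureTheory.IntegrableOn
      (fun τ : ℝ => (p / τ) • mvE (Bt19 p (-τ)) (piu19 (f19 (x τ)))) (Set.Ioi 0))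
    (hfix : ∀ t ≥ (0 : ℝ),
      T19 p ((WithLp.equiv 2 (Fin 3 → ℂ)).symm ![σ₁, 0, σ₃]) x t = x t) :
    (∀ t ≥ (0 : ℝ), x t 0 = mlE p 1 (-((t ^ p : ℝ) : ℂ)) * σ₁) ∧
      (∀ t ≥ (0 : ℝ), x t 2 = mlE p 1 (-5 * ((t ^ p : ℝ) : ℂ)) * σ₃) ∧
      x 0 1 = 4 * (((5 / 2 : ℝ) ^ (1 / p - 1) : ℝ) : ℂ) * σ₁ * σ₃ *
        ∫ τ in Set.Ioi (0 : ℝ),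
          ((Real.exp (-((5 / 2 : ℝ) ^ (1 / p)) * τ) : ℝ) : ℂ)
            * mlE p 1 (-((τ ^ p : ℝ) : ℂ)) * mlE p 1 (-5 * ((τ ^ p : ℝ) : ℂ)) := by
  have hx₁ : ∀ t ≥ (0 : ℝ), x t 0 = mlE p 1 (-((t ^ p : ℝ) : ℂ)) * σ₁ := fun t ht => by
    rw [← hfix t ht, T19_apply_of_ne_one hp0 _ _ _ (by decide)]
    rfl
  have hx₃ : ∀ t ≥ (0 : ℝ), x t 2 = mlE p 1 (-5 * ((t ^ p : ℝ) : ℂ)) * σ₃ := fun t ht => by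
    rw [← hfix t ht, T19_apply_of_ne_one hp0 _ _ _ (by decide)]
    rfl
  refine ⟨hx₁, hx₃, ?_⟩
  rw [← hfix 0 le_rfl, T19_zero_apply_one hp0 _ hint, ← integral_const_mul]
  refine (zero_add _).trans (setIntegral_congr_fun measurableSet_Ioi fun τ hτ => ?_)
  have hkernel := ofReal_div_mul_psiT_neg (lam := 5 / 2) hp0.ne' (ne_of_gt hτ) (by norm_num)
  rw [show ((5 / 2 : ℝ) : ℂ) = 5 / 2 by norm_num] at hkernel
  rw [hx₁ τ (le_of_lt hτ), hx₃ τ (le_of_lt hτ), hkernel]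
  ring

theorem stmt_19 (p : ℝ) (hp0 : 0 < p) (hp1 : p < 1) (σ₁ σ₃ : ℂ)
    (x : ℝ → EuclideanSpace ℂ (Fin 3)) (hx : BC x)
    (hint : MeasureTheory.IntegrableOn
      (fun τ : ℝ => (p / τ) • mvE (Bt19 p (-τ)) (piu19 (f19 (x τ)))) (Set.Ioi 0))
    (hfix : ∀ t ≥ (0 : ℝ),
      T19 p ((WithLp.equiv 2 (Fin 3 → ℂ)).symm ![σ₁, 0, σ₃]) x t = x t) :
    (∀ t ≥ (0 : ℝ), x t 0 = mlE p 1 (-((t ^ p : ℝ) : ℂ)) * σ₁) ∧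
      (∀ t ≥ (0 : ℝ), x t 2 = mlE p 1 (-5 * ((t ^ p : ℝ) : ℂ)) * σ₃) ∧
      x 0 1 = 4 * (((5 / 2 : ℝ) ^ (1 / p - 1) : ℝ) : ℂ) * σ₁ * σ₃ *
        ∫ τ in Set.Ioi (0 : ℝ),
          ((Real.exp (-((5 / 2 : ℝ) ^ (1 / p)) * τ) : ℝ) : ℂ)
            * mlE p 1 (-((τ ^ p : ℝ) : ℂ)) * mlE p 1 (-5 * ((τ ^ p : ℝ) : ℂ)) :=
  stmt_19_general p hp0 σ₁ σ₃ x hint hfix
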